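/- Let R be a finite commutative chain ring with maximal ideal ⟨γ⟩ and residue field R/⟨γ⟩, and let A ∈ M_{s×l}(R) with s ≤ l. Then A is non-singular by columns (NSC) if and only if its entrywise reduction Ā ∈ M_{s×l}(R/⟨γ⟩) modulo ⟨γ⟩ is non-singular by columns. -/

import Mathlib

open Matrix BigOperators

/-- A matrix `A ∈ M_{s×l}(S)` with `s ≤ l` is non-singular by columns (NSC) if for every
`1 ≤ t ≤ s`, every `t×t` submatrix of the matrix consisting of the upper `t` rows of `A`
is non-singular (its determinant is a unit). -/
def NSC {S : Type*} [CommRing S] {s l : ℕ} (A : Matrix (Fin s) (Fin l) S) : Prop :=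
  ∀ (t : ℕ), 0 < t → ∀ (hts : t ≤ s) (f : Fin t → Fin l), StrictMono f →
    IsUnit (Matrix.det (Matrix.of fun i j : Fin t => A (Fin.castLE hts i) (f j)))

/- Every minor of the reduction is the reduction of the corresponding minor, and reduction
modulo `⟨γ⟩ ⊆ 𝔪` both preserves and reflects units, since in a local ring every element outside
the maximal ideal is a unit. -/

section Map

variable {S T : Type*} [CommRing S] [CommRing T] {s l : ℕ}

theorem det_of_map_apply {ι m n : Type*} [Fintype ι] [DecidableEq ι] (φ : S →+* T)
    (A : Matrix m n S) (r : ι → m) (c : ι → n) :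
    det (of fun i j => A.map φ (r i) (c j)) = φ (det (of fun i j => A (r i) (c j))) :=
  (φ.map_det _).symm

theorem NSC.map {A : Matrix (Fin s) (Fin l) S} (h : NSC A) (φ : S →+* T) : NSC (A.map φ) :=
  fun t ht hts f hf => det_of_map_apply φ A _ f ▸ (h t ht hts f hf).map φ

theorem NSC.of_map {φ : S →+* T} [IsLocalHom φ] {A : Matrix (Fin s) (Fin l) S}
    (h : NSC (A.map φ)) : NSC A :=
  fun t ht hts f hf => (isUnit_map_iff φ _).mp (det_of_map_apply φ A _ f ▸ h t ht hts f hf)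

theorem nsc_map_iff (φ : S →+* T) [IsLocalHom φ] (A : Matrix (Fin s) (Fin l) S) :
    NSC (A.map φ) ↔ NSC A :=
  ⟨NSC.of_map, fun h => h.map φ⟩

end Map

theorem nsc_iff_nsc_reduction_general {R : Type*} [CommRing R] [IsLocalRing R]
    (γ : R) (hγ : Ideal.span {γ} = IsLocalRing.maximalIdeal R)
    {s l : ℕ} (A : Matrix (Fin s) (Fin l) R) :
    NSC A ↔ NSC (A.map (Ideal.Quotient.mk (Ideal.span {γ}))) := by
  have : IsLocalHom (Ideal.Quotient.mk (Ideal.span {γ})) :=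
    isLocalHom_of_le_jacobson_bot _ (hγ.le.trans (IsLocalRing.maximalIdeal_le_jacobson ⊥))
  exact (nsc_map_iff _ A).symm

/-- Over a finite commutative chain ring `R` with maximal ideal `⟨γ⟩`, a matrix
`A ∈ M_{s×l}(R)` (with `s ≤ l`) is NSC iff its entrywise reduction modulo `⟨γ⟩` is NSC. -/
theorem nsc_iff_nsc_reduction {R : Type*} [CommRing R] [Fintype R] [IsLocalRing R]
    (γ : R) (hγ : Ideal.span {γ} = IsLocalRing.maximalIdeal R)
    {s l : ℕ} (hsl : s ≤ l) (A : Matrix (Fin s) (Fin l) R) :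
    NSC A ↔ NSC (A.map (Ideal.Quotient.mk (Ideal.span {γ}))) :=
  nsc_iff_nsc_reduction_general γ hγ A
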